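/- arXiv:2601.18406 — 4 statements merged into one kernel-verified Lean document; each statement's English description precedes it below -/
import Mathlib

section
/- Let T₀, C₁, C₂, C₃, C_res > 0. Then there exist ε₀ ∈ (0,1] and M > 0 such that for every ε ∈ (0,ε₀) and every continuous function S : [0, T₀/ε²] → [0,∞) satisfying S(t) ≤ C_res + ∫₀^t (C₁ ε² S(τ) + C₂ ε³ S(τ)² + C₃ ε⁴ S(τ)³) dτ for all t ∈ [0, T₀/ε²], one has S(t) ≤ M for all t ∈ [0, T₀/ε²]. -/
set_option maxHeartbeats 1000000

open Set MeasureTheory intervalIntegral Real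

/-- Let `T₀, C₁, C₂, C₃, C_res > 0`. Then there exist
`ε₀ ∈ (0,1]` and `M > 0` such that for every `ε ∈ (0,ε₀)` and every continuous
function `S : [0, T₀/ε²] → [0,∞)` satisfying
`S(t) ≤ C_res + ∫₀^t (C₁ ε² S(τ) + C₂ ε³ S(τ)² + C₃ ε⁴ S(τ)³) dτ`
for all `t ∈ [0, T₀/ε²]`, one has `S(t) ≤ M` on `[0, T₀/ε²]`. -/
theorem nonlinear_gronwall_bootstrap (T₀ C₁ C₂ C₃ Cres : ℝ)
    (hT₀ : 0 < T₀) (h1 : 0 < C₁) (h2 : 0 < C₂) (h3 : 0 < C₃) (hres : 0 < Cres) :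
    ∃ ε₀ ∈ Set.Ioc (0 : ℝ) 1, ∃ M : ℝ, 0 < M ∧
      ∀ ε ∈ Set.Ioo (0 : ℝ) ε₀, ∀ S : ℝ → ℝ,
        ContinuousOn S (Set.Icc 0 (T₀ / ε ^ 2)) →
        (∀ t ∈ Set.Icc (0 : ℝ) (T₀ / ε ^ 2), 0 ≤ S t) →
        (∀ t ∈ Set.Icc (0 : ℝ) (T₀ / ε ^ 2),
          S t ≤ Cres + ∫ τ in (0 : ℝ)..t,
            (C₁ * ε ^ 2 * S τ + C₂ * ε ^ 3 * (S τ) ^ 2 + C₃ * ε ^ 4 * (S τ) ^ 3)) →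
        ∀ t ∈ Set.Icc (0 : ℝ) (T₀ / ε ^ 2), S t ≤ M := by
  set K : ℝ := C₁ + 1 with hKdef
  have hKpos : 0 < K := by positivity
  set B : ℝ := Cres * Real.exp (K * T₀) with hBdef
  have hBpos : 0 < B := by positivity
  have hCresB : Cres ≤ B := by
    have h1' : (1:ℝ) ≤ Real.exp (K * T₀) := by
      rw [← Real.exp_zero]; exact Real.exp_le_exp.2 (by positivity)
    nlinarith
  set M : ℝ := Cres + K * T₀ * B + B + 1 with hMdef
  have hMpos : 0 < M := by positivity
  have hBM : B ≤ M := by nlinarith [mul_pos (mul_pos hKpos hT₀) hBpos]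
  set D : ℝ := C₂ * M + C₃ * M ^ 2 with hDdef
  have hDpos : 0 < D := by positivity
  refine ⟨min 1 (1/D), ⟨lt_min one_pos (by positivity), min_le_left _ _⟩, M, hMpos, ?_⟩
  rintro ε ⟨hε0, hεlt⟩ S hScont hSnn hSineq
  set L : ℝ := T₀ / ε ^ 2 with hLdef
  have hε2 : (0:ℝ) < ε ^ 2 := by positivity
  have hLpos : 0 < L := div_pos hT₀ hε2
  have hε1 : ε ≤ 1 := (lt_of_lt_of_le hεlt (min_le_left _ _)).le
  have hεD : ε * D ≤ 1 := by
    have hεD' : ε < 1 / D := lt_of_lt_of_le hεlt (min_le_right _ _)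
    have := (lt_div_iff₀ hDpos).1 hεD'
    linarith
  -- the integrand
  set g : ℝ → ℝ := fun τ => C₁ * ε ^ 2 * S τ + C₂ * ε ^ 3 * (S τ) ^ 2 + C₃ * ε ^ 4 * (S τ) ^ 3
    with hgdef
  have hgcont : ContinuousOn g (Set.Icc 0 L) := by
    apply ContinuousOn.add
    apply ContinuousOn.add
    · exact continuousOn_const.mul hScont
    · exact continuousOn_const.mul (hScont.pow 2)
    · exact continuousOn_const.mul (hScont.pow 3)
  have hgnn : ∀ τ ∈ Set.Icc (0:ℝ) L, 0 ≤ g τ := by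
    intro τ hτ
    have := hSnn τ hτ
    have : 0 ≤ S τ := this
    simp only [hgdef]
    positivity
  -- absorption of the nonlinear terms
  have habs : ∀ τ ∈ Set.Icc (0:ℝ) L, S τ ≤ M → g τ ≤ K * ε ^ 2 * S τ := by
    intro τ hτ hSM
    have hs : 0 ≤ S τ := hSnn τ hτ
    have hee : ε ^ 2 ≤ ε := by nlinarith
    have hεD' : ε * (C₂ * M) + ε * (C₃ * M ^ 2) ≤ 1 := by
      have heq : ε * D = ε * (C₂ * M) + ε * (C₃ * M ^ 2) := by rw [hDdef]; ring
      linarith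
    have hkey : ε * (C₂ * M) + ε ^ 2 * (C₃ * M ^ 2) ≤ 1 := by
      have := mul_le_mul_of_nonneg_right hee (show (0:ℝ) ≤ C₃ * M ^ 2 by positivity)
      linarith
    have hS2 : S τ ^ 2 ≤ M * S τ := by nlinarith
    have hS3 : S τ ^ 3 ≤ M ^ 2 * S τ := by nlinarith
    have h2' : C₂ * ε ^ 3 * S τ ^ 2 ≤ ε * (C₂ * M) * (ε ^ 2 * S τ) := by
      have := mul_le_mul_of_nonneg_left hS2 (show (0:ℝ) ≤ C₂ * ε ^ 3 by positivity)
      linarith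
    have h3' : C₃ * ε ^ 4 * S τ ^ 3 ≤ ε ^ 2 * (C₃ * M ^ 2) * (ε ^ 2 * S τ) := by
      have := mul_le_mul_of_nonneg_left hS3 (show (0:ℝ) ≤ C₃ * ε ^ 4 by positivity)
      linarith
    have hsum := mul_le_mul_of_nonneg_right hkey (show (0:ℝ) ≤ ε ^ 2 * S τ by positivity)
    simp only [hgdef, hKdef]
    linarith
  -- Gronwall core lemma: if S ≤ M on [0,c] then S ≤ B on [0,c]
  have keyG : ∀ c ∈ Set.Icc (0:ℝ) L, (∀ s ∈ Set.Icc (0:ℝ) c, S s ≤ M) →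
      ∀ s ∈ Set.Icc (0:ℝ) c, S s ≤ B := by
    intro c hc hbdd
    have hsubset : Set.Icc (0:ℝ) c ⊆ Set.Icc 0 L := Set.Icc_subset_Icc le_rfl hc.2
    set F : ℝ → ℝ := fun t => Cres + ∫ τ in (0:ℝ)..t, g τ with hFdef
    have hgint : ∀ x ∈ Set.Icc (0:ℝ) c, IntervalIntegrable g volume 0 x := by
      intro x hx
      apply ContinuousOn.intervalIntegrable
      rw [Set.uIcc_of_le hx.1]
      exact hgcont.mono (Set.Icc_subset_Icc le_rfl (hx.2.trans hc.2))
    have hFcont : ContinuousOn F (Set.Icc 0 c) := by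
      apply continuousOn_const.add
      have hint : IntegrableOn g (Set.uIcc 0 c) volume := by
        rw [Set.uIcc_of_le hc.1]
        exact (hgcont.mono hsubset).integrableOn_compact isCompact_Icc
      have := intervalIntegral.continuousOn_primitive_interval hint
      rwa [Set.uIcc_of_le hc.1] at this
    have hF' : ∀ x ∈ Set.Ico (0:ℝ) c, HasDerivWithinAt F (g x) (Set.Ici x) x := by
      intro x hx
      have hxL : x < L := lt_of_lt_of_le hx.2 hc.2
      have hxmem : x ∈ Set.Icc (0:ℝ) L := ⟨hx.1, hxL.le⟩
      have hmem : Set.Icc (0:ℝ) L ∈ nhdsWithin x (Set.Ici x) := by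
        rw [mem_nhdsWithin]
        refine ⟨Set.Iio L, isOpen_Iio, hxL, ?_⟩
        rintro y ⟨hy1, hy2⟩
        exact ⟨hx.1.trans hy2, le_of_lt hy1⟩
      have hmem' : Set.Icc (0:ℝ) L ∈ nhdsWithin x (Set.Ioi x) :=
        nhdsWithin_mono x Set.Ioi_subset_Ici_self hmem
      have hcw : ContinuousWithinAt g (Set.Ioi x) x :=
        (hgcont x hxmem).mono_of_mem_nhdsWithin hmem'
      have hmeas : StronglyMeasurableAtFilter g (nhdsWithin x (Set.Ioi x)) :=
        ⟨Set.Icc 0 L, hmem', hgcont.aestronglyMeasurable measurableSet_Icc⟩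
      have hd := intervalIntegral.integral_hasDerivWithinAt_right (s := Set.Ici x) (t := Set.Ioi x)
        (hgint x ⟨hx.1, hx.2.le⟩) hmeas hcw
      exact hd.const_add Cres
    have hFS : ∀ x ∈ Set.Icc (0:ℝ) c, S x ≤ F x := fun x hx => hSineq x (hsubset hx)
    have hFnn : ∀ x ∈ Set.Icc (0:ℝ) c, 0 ≤ F x :=
      fun x hx => (hSnn x (hsubset hx)).trans (hFS x hx)
    have hbound : ∀ x ∈ Set.Ico (0:ℝ) c, ‖g x‖ ≤ (K * ε ^ 2) * ‖F x‖ + 0 := by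
      intro x hx
      have hx' : x ∈ Set.Icc (0:ℝ) c := ⟨hx.1, hx.2.le⟩
      rw [Real.norm_of_nonneg (hgnn x (hsubset hx')), Real.norm_of_nonneg (hFnn x hx'), add_zero]
      have hgx : g x ≤ K * ε ^ 2 * S x := habs x (hsubset hx') (hbdd x hx')
      have : K * ε ^ 2 * S x ≤ K * ε ^ 2 * F x :=
        mul_le_mul_of_nonneg_left (hFS x hx') (by positivity)
      linarith
    have ha : ‖F 0‖ ≤ Cres := by
      have : F 0 = Cres := by simp [hFdef]
      rw [this, Real.norm_of_nonneg hres.le]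
    have hgron := norm_le_gronwallBound_of_norm_deriv_right_le hFcont hF' ha hbound
    intro s hs
    have h := hgron s hs
    rw [gronwallBound_ε0, sub_zero] at h
    have hFs : F s ≤ Cres * Real.exp (K * ε ^ 2 * s) := (le_abs_self _).trans h
    have hsT : ε ^ 2 * s ≤ T₀ := by
      have hsL : s ≤ T₀ / ε ^ 2 := hs.2.trans hc.2
      calc ε ^ 2 * s ≤ ε ^ 2 * (T₀ / ε ^ 2) := by nlinarith
        _ = T₀ := by field_simp
    have hexp : Cres * Real.exp (K * ε ^ 2 * s) ≤ B := by
      rw [hBdef]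
      apply mul_le_mul_of_nonneg_left _ hres.le
      apply Real.exp_le_exp.2
      calc K * ε ^ 2 * s = K * (ε ^ 2 * s) := by ring
        _ ≤ K * T₀ := mul_le_mul_of_nonneg_left hsT hKpos.le
    exact (hFS s hs).trans (hFs.trans hexp)
  -- Bootstrap
  set A : Set ℝ := {c | c ∈ Set.Icc (0:ℝ) L ∧ ∀ s ∈ Set.Icc (0:ℝ) c, S s ≤ M} with hAdef
  have h0A : (0:ℝ) ∈ A := by
    refine ⟨⟨le_rfl, hLpos.le⟩, ?_⟩
    intro s hs
    have hs0 : s = 0 := le_antisymm hs.2 hs.1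
    subst hs0
    have := hSineq 0 ⟨le_rfl, hLpos.le⟩
    simp only [intervalIntegral.integral_same, add_zero] at this
    linarith [hBM, hCresB]
  have hAbdd : BddAbove A := ⟨L, fun c hc => hc.1.2⟩
  have hAne : A.Nonempty := ⟨0, h0A⟩
  set cs : ℝ := sSup A with hcsdef
  have hcsmem : cs ∈ Set.Icc (0:ℝ) L :=
    ⟨le_csSup hAbdd h0A, csSup_le hAne fun c hc => hc.1.2⟩
  -- S ≤ B strictly below cs
  have hSb : ∀ s, 0 ≤ s → s < cs → S s ≤ B := by
    intro s h0s hslt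
    obtain ⟨c, hcA, hsc⟩ := exists_lt_of_lt_csSup hAne hslt
    exact keyG c hcA.1 hcA.2 s ⟨h0s, hsc.le⟩
  -- bound at cs
  have hScs : S cs ≤ Cres + K * T₀ * B := by
    have hineq := hSineq cs hcsmem
    have hint1 : IntervalIntegrable g volume 0 cs := by
      apply ContinuousOn.intervalIntegrable
      rw [Set.uIcc_of_le hcsmem.1]
      exact hgcont.mono (Set.Icc_subset_Icc le_rfl hcsmem.2)
    have hint2 : IntervalIntegrable (fun _ : ℝ => K * ε ^ 2 * B) volume 0 cs :=
      intervalIntegrable_const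
    have hae : ∀ᵐ τ ∂(volume.restrict (Set.Icc (0:ℝ) cs)), g τ ≤ K * ε ^ 2 * B := by
      have hne : ∀ᵐ (τ : ℝ) ∂(volume.restrict (Set.Icc (0:ℝ) cs)), τ ≠ cs := by
        refine (MeasureTheory.ae_iff).2 ?_
        have hsub : {τ : ℝ | ¬ τ ≠ cs} ⊆ {cs} := by
          intro τ hτ
          simp only [Set.mem_setOf_eq, not_not] at hτ
          simp [hτ]
        refine measure_mono_null hsub ?_
        simp [MeasureTheory.Measure.restrict_apply']
      have hmem : ∀ᵐ τ ∂(volume.restrict (Set.Icc (0:ℝ) cs)), τ ∈ Set.Icc (0:ℝ) cs :=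
        MeasureTheory.ae_restrict_mem measurableSet_Icc
      filter_upwards [hne, hmem] with τ hτne hτmem
      have hτlt : τ < cs := lt_of_le_of_ne hτmem.2 hτne
      have hτL : τ ∈ Set.Icc (0:ℝ) L := ⟨hτmem.1, hτmem.2.trans hcsmem.2⟩
      have hSB : S τ ≤ B := hSb τ hτmem.1 hτlt
      have := habs τ hτL (hSB.trans hBM)
      calc g τ ≤ K * ε ^ 2 * S τ := this
        _ ≤ K * ε ^ 2 * B := mul_le_mul_of_nonneg_left hSB (by positivity)
    have hintle : (∫ τ in (0:ℝ)..cs, g τ) ≤ ∫ _ in (0:ℝ)..cs, K * ε ^ 2 * B :=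
      intervalIntegral.integral_mono_ae_restrict hcsmem.1 hint1 hint2 hae
    have hconst : (∫ _ in (0:ℝ)..cs, K * ε ^ 2 * B) = cs * (K * ε ^ 2 * B) := by
      rw [intervalIntegral.integral_const, smul_eq_mul, sub_zero]
    have hcsT : ε ^ 2 * cs ≤ T₀ := by
      have : cs ≤ T₀ / ε ^ 2 := hcsmem.2
      calc ε ^ 2 * cs ≤ ε ^ 2 * (T₀ / ε ^ 2) := by nlinarith
        _ = T₀ := by field_simp
    have : cs * (K * ε ^ 2 * B) ≤ K * T₀ * B := by
      have h := mul_le_mul_of_nonneg_left hcsT (show (0:ℝ) ≤ K * B by positivity)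
      nlinarith [h]
    calc S cs ≤ Cres + ∫ τ in (0:ℝ)..cs, g τ := hineq
      _ ≤ Cres + cs * (K * ε ^ 2 * B) := by rw [← hconst]; linarith
      _ ≤ Cres + K * T₀ * B := by linarith
  have hScsM : S cs < M := by rw [hMdef]; linarith [hBpos]
  -- cs ∈ A
  have hcsA : cs ∈ A := by
    refine ⟨hcsmem, ?_⟩
    intro s hs
    rcases lt_or_eq_of_le hs.2 with h | h
    · exact (hSb s hs.1 h).trans hBM
    · rw [h]; exact hScsM.le
  -- cs = L
  have hcsL : cs = L := by
    by_contra hne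
    have hlt : cs < L := lt_of_le_of_ne hcsmem.2 hne
    have hnhd : {t : ℝ | S t < M} ∈ nhdsWithin cs (Set.Icc (0:ℝ) L) :=
      (hScont cs hcsmem) (Iio_mem_nhds hScsM)
    rw [mem_nhdsWithin] at hnhd
    obtain ⟨u, huo, hcsu, husub⟩ := hnhd
    obtain ⟨δ, hδpos, hball⟩ := Metric.isOpen_iff.1 huo cs hcsu
    set c : ℝ := min L (cs + δ / 2) with hcdef
    have hcgt : cs < c := lt_min hlt (by linarith)
    have hcmem : c ∈ Set.Icc (0:ℝ) L := ⟨hcsmem.1.trans hcgt.le, min_le_left _ _⟩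
    have hcA : c ∈ A := by
      refine ⟨hcmem, ?_⟩
      intro s hs
      rcases le_or_gt s cs with h | h
      · exact hcsA.2 s ⟨hs.1, h⟩
      · have hsL : s ∈ Set.Icc (0:ℝ) L := ⟨hs.1, hs.2.trans hcmem.2⟩
        have hsball : s ∈ Metric.ball cs δ := by
          rw [Metric.mem_ball, Real.dist_eq, abs_of_nonneg (by linarith)]
          have : s ≤ cs + δ / 2 := hs.2.trans (min_le_right _ _)
          linarith
        exact (husub ⟨hball hsball, hsL⟩).le
    exact absurd (le_csSup hAbdd hcA) (not_le.2 hcgt)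
  intro t ht
  exact hcsA.2 t (by rwa [hcsL])
end

section
/- Let d ≥ 1, δ ∈ (0,1), T₀ > 0 and C_B > 0. Then there exist C > 0 and ε₀ ∈ (0,1] such that for every ε ∈ (0,ε₀], every continuous B̂ : [0,T₀] → ℓ¹_{3−δ}(ℤ^d) with sup_{T∈[0,T₀]} ‖B̂(T)‖_{ℓ¹_{3−δ}} ≤ C_B, and every t ∈ [0, T₀/ε²]: Σ_{K∈ℤ^d, ε|K| ≤ 1/10} |∫₀^t e^{λ(e₁+εK)(t−τ)} (−4ε⁴K₁³ − ε⁵K₁⁴) B̂(K, ε²τ) dτ| ≤ C ε². -/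
/-!
Mode by mode, for `ε|K| ≤ 1` the symbol satisfies `λ(e₁ + εK) ≤ -ε²K₁²` and the multiplier is at
most `5ε⁴|K₁|³`. Trading `|K₁|^δ` against the heat factor, `|K₁|^δ e^{-ε²K₁²s} ≤ (ε²s)^{-δ/2}`,
leaves `|K₁|^{3-δ}`, which the `ℓ¹_{3-δ}` weight absorbs. Summing over `K` under the integral costs
`C_B`, and `∫₀^t (ε²(t-τ))^{-δ/2} dτ = (ε²t)^{1-δ/2} / (ε²(1-δ/2)) ≤ T₀^{1-δ/2} / (ε²(1-δ/2))`,
so the prefactor `ε⁴` becomes `ε²`.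
-/

/-- The weight `(1 + |K|²)^{r/2}` on the lattice `ℤ^d`. -/
noncomputable def wt (d : ℕ) (r : ℝ) (K : Fin d → ℤ) : ℝ :=
  (1 + ∑ i, ((K i : ℝ)) ^ 2) ^ (r / 2)

/-- Continuity of `T ↦ B(T)` on `[0,T₀]` with respect to the `ℓ¹_r` norm. -/
def NormContOn (d : ℕ) (r T₀ : ℝ) (B : ℝ → (Fin d → ℤ) → ℂ) : Prop :=
  ∀ T ∈ Set.Icc (0 : ℝ) T₀, ∀ η > 0, ∃ ν > 0, ∀ T' ∈ Set.Icc (0 : ℝ) T₀,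
    |T' - T| < ν → ∑' K : Fin d → ℤ, ‖B T' K - B T K‖ * wt d r K < η

open MeasureTheory Set Real

theorem rpow_le_exp_self {y c : ℝ} (hy : 0 ≤ y) (hc0 : 0 ≤ c) (hc1 : c ≤ 1) :
    y ^ c ≤ exp y :=
  calc y ^ c ≤ (1 + y) ^ c := rpow_le_rpow hy (by linarith) hc0
    _ ≤ (1 + y) ^ (1 : ℝ) := rpow_le_rpow_of_exponent_le (by linarith) hc1
    _ = 1 + y := rpow_one _
    _ ≤ exp y := by linarith [add_one_le_exp y]

theorem rpow_mul_exp_neg_mul_le {b s c : ℝ} (hb : 0 ≤ b) (hs : 0 < s) (hc0 : 0 ≤ c)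
    (hc1 : c ≤ 1) : b ^ c * exp (-(b * s)) ≤ s ^ (-c) := by
  have hbs : b ^ c = (b * s) ^ c * s ^ (-c) := by
    rw [mul_rpow hb hs.le, rpow_neg hs.le, mul_assoc, mul_inv_cancel₀ (rpow_pos_of_pos hs c).ne',
      mul_one]
  have hdecay : (b * s) ^ c * exp (-(b * s)) ≤ 1 := by
    rw [← le_div_iff₀ (exp_pos _), exp_neg, div_inv_eq_mul, one_mul]
    exact rpow_le_exp_self (by positivity) hc0 hc1
  calc b ^ c * exp (-(b * s)) = s ^ (-c) * ((b * s) ^ c * exp (-(b * s))) := by rw [hbs]; ring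
    _ ≤ s ^ (-c) * 1 := by gcongr
    _ = s ^ (-c) := mul_one _

theorem intervalIntegrable_rpow_mul_sub {c r : ℝ} (hc : c ≠ 0) (hr : -1 < r) (t : ℝ) :
    IntervalIntegrable (fun τ => (c * (t - τ)) ^ r) volume 0 t := by
  have := ((intervalIntegral.intervalIntegrable_rpow' hr (a := 0) (b := c * t)).comp_mul_left
    (c := c)).comp_sub_left t
  simpa [hc] using this.symm

theorem integral_rpow_mul_sub {c r : ℝ} (hc : c ≠ 0) (hr : -1 < r) (t : ℝ) :
    ∫ τ in (0 : ℝ)..t, (c * (t - τ)) ^ r = (c * t) ^ (r + 1) / (c * (r + 1)) := by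
  simp_rw [mul_sub]
  rw [intervalIntegral.integral_comp_sub_mul (fun x => x ^ r) hc, integral_rpow (Or.inl hr)]
  simp [zero_rpow (by linarith : r + 1 ≠ 0), div_eq_mul_inv, mul_comm, mul_left_comm]

theorem ite_norm_intervalIntegral_le {E : Type*} [NormedAddCommGroup E] [NormedSpace ℝ E]
    {p : Prop} [Decidable p] {F : ℝ → E} {G : ℝ → ℝ} {a b : ℝ} (hab : a ≤ b)
    (hG : IntervalIntegrable G volume a b) (hG0 : ∀ τ ∈ Icc a b, 0 ≤ G τ)
    (hFG : p → ∀ τ ∈ Ioo a b, ‖F τ‖ ≤ G τ) :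
    (if p then ‖∫ τ in a..b, F τ‖ else 0) ≤ ∫ τ in a..b, G τ := by
  split_ifs with hp
  · refine intervalIntegral.norm_integral_le_of_norm_le hab ?_ hG
    filter_upwards [Measure.ae_ne volume b] with τ hτb hτ
    exact hFG hp τ ⟨hτ.1, lt_of_le_of_ne hτ.2 hτb⟩
  · exact intervalIntegral.integral_nonneg hab hG0

theorem tsum_le_mul_intervalIntegral {ι : Type*} {a : ι → ℝ} {h : ℝ → ℝ} {g : ι → ℝ → ℝ}
    {t M : ℝ} (ht : 0 ≤ t) (hh : IntervalIntegrable h volume 0 t)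
    (hh0 : ∀ τ ∈ Icc 0 t, 0 ≤ h τ) (hg : ∀ i, IntervalIntegrable (fun τ => h τ * g i τ) volume 0 t)
    (hgM : ∀ τ ∈ Icc 0 t, ∀ F : Finset ι, ∑ i ∈ F, g i τ ≤ M)
    (ha : ∀ i, a i ≤ ∫ τ in (0 : ℝ)..t, h τ * g i τ) :
    ∑' i, a i ≤ M * ∫ τ in (0 : ℝ)..t, h τ := by
  have hM : 0 ≤ M := by simpa using hgM 0 ⟨le_rfl, ht⟩ ∅
  refine tsum_le_of_sum_le' (mul_nonneg hM (intervalIntegral.integral_nonneg ht hh0)) fun F => ?_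
  calc ∑ i ∈ F, a i ≤ ∑ i ∈ F, ∫ τ in (0 : ℝ)..t, h τ * g i τ := Finset.sum_le_sum fun i _ => ha i
    _ = ∫ τ in (0 : ℝ)..t, h τ * ∑ i ∈ F, g i τ := by
        rw [← intervalIntegral.integral_finsetSum fun i _ => hg i]
        simp_rw [Finset.mul_sum]
    _ ≤ ∫ τ in (0 : ℝ)..t, M * h τ := by
        refine intervalIntegral.integral_mono_on ht ?_ (hh.const_mul M) fun τ hτ => ?_
        · simpa only [Finset.sum_fn, Finset.mul_sum] using IntervalIntegrable.sum F fun i _ => hg i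
        · rw [mul_comm M]; exact mul_le_mul_of_nonneg_left (hgM τ hτ F) (hh0 τ hτ)
    _ = M * ∫ τ in (0 : ℝ)..t, h τ := intervalIntegral.integral_const_mul M _

theorem mul_integral_kernel_le {ε t T₀ δ M : ℝ} (hε : ε ≠ 0) (ht : 0 ≤ t)
    (htT : ε ^ 2 * t ≤ T₀) (hδ : δ < 2) (hM : 0 ≤ M) :
    M * ∫ τ in (0 : ℝ)..t, 5 * ε ^ 4 * (ε ^ 2 * (t - τ)) ^ (-(δ / 2)) ≤
      5 * M * T₀ ^ (1 - δ / 2) / (1 - δ / 2) * ε ^ 2 := by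
  have he : 0 < 1 - δ / 2 := by linarith
  have hT : (ε ^ 2 * t) ^ (1 - δ / 2) ≤ T₀ ^ (1 - δ / 2) :=
    rpow_le_rpow (by positivity) htT he.le
  rw [intervalIntegral.integral_const_mul, integral_rpow_mul_sub (pow_ne_zero 2 hε) (by linarith),
    show -(δ / 2) + 1 = 1 - δ / 2 by ring]
  calc M * (5 * ε ^ 4 * ((ε ^ 2 * t) ^ (1 - δ / 2) / (ε ^ 2 * (1 - δ / 2))))
      = 5 * M * (ε ^ 2 * t) ^ (1 - δ / 2) / (1 - δ / 2) * ε ^ 2 := by field_simp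
    _ ≤ 5 * M * T₀ ^ (1 - δ / 2) / (1 - δ / 2) * ε ^ 2 := by gcongr

theorem symbol_le_neg_sq {x Q : ℝ} (hx : |x| ≤ 1) (hQ : 0 ≤ Q) :
    -(1 - (1 + x) ^ 2) ^ 2 - 4 * Q ≤ -x ^ 2 := by
  obtain ⟨hx₁, hx₂⟩ := abs_le.mp hx
  have : 0 ≤ x ^ 2 * ((1 + x) * (3 + x)) :=
    mul_nonneg (sq_nonneg x) (mul_nonneg (by linarith) (by linarith))
  nlinarith

theorem abs_multiplier_le {ε k : ℝ} (hε : 0 ≤ ε) (hεk : ε * |k| ≤ 1) :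
    |-4 * ε ^ 4 * k ^ 3 - ε ^ 5 * k ^ 4| ≤ 5 * ε ^ 4 * |k| ^ 3 := by
  have h4 : |4 + ε * k| ≤ 5 := by
    calc |4 + ε * k| ≤ |(4 : ℝ)| + |ε * k| := abs_add_le _ _
      _ ≤ 5 := by rw [abs_mul, abs_of_nonneg hε]; norm_num; linarith
  calc |-4 * ε ^ 4 * k ^ 3 - ε ^ 5 * k ^ 4| = ε ^ 4 * |k| ^ 3 * |4 + ε * k| := by
        rw [show -4 * ε ^ 4 * k ^ 3 - ε ^ 5 * k ^ 4 = -(ε ^ 4 * k ^ 3 * (4 + ε * k)) by ring,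
          abs_neg, abs_mul, abs_mul, abs_pow, abs_pow, abs_of_nonneg hε]
    _ ≤ ε ^ 4 * |k| ^ 3 * 5 := by gcongr
    _ = 5 * ε ^ 4 * |k| ^ 3 := by ring

theorem abs_pow_three_eq_rpow_mul_rpow (k δ : ℝ) :
    |k| ^ 3 = (k ^ 2) ^ ((3 - δ) / 2) * (k ^ 2) ^ (δ / 2) := by
  rw [← rpow_add' (sq_nonneg k) (by ring_nf; norm_num), ← sq_abs k,
    ← rpow_natCast_mul (abs_nonneg k), show ((2 : ℕ) : ℝ) * ((3 - δ) / 2 + δ / 2) = (3 : ℕ) by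
      push_cast; ring, rpow_natCast]

theorem exp_symbol_mul_abs_multiplier_le {ε s δ k S Q : ℝ} (hε : 0 < ε) (hs : 0 < s)
    (hδ0 : 0 ≤ δ) (hδ2 : δ ≤ 2) (hkS : k ^ 2 ≤ S) (hQ : 0 ≤ Q) (hεk : ε * |k| ≤ 1) :
    exp ((-(1 - (1 + ε * k) ^ 2) ^ 2 - 4 * Q) * s) * |-4 * ε ^ 4 * k ^ 3 - ε ^ 5 * k ^ 4| ≤
      5 * ε ^ 4 * (ε ^ 2 * s) ^ (-(δ / 2)) * (1 + S) ^ ((3 - δ) / 2) := by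
  have hexp : exp ((-(1 - (1 + ε * k) ^ 2) ^ 2 - 4 * Q) * s) ≤ exp (-(k ^ 2 * (ε ^ 2 * s))) := by
    have hx : |ε * k| ≤ 1 := by rwa [abs_mul, abs_of_pos hε]
    have := mul_le_mul_of_nonneg_right (symbol_le_neg_sq hx hQ) hs.le
    exact exp_le_exp.mpr (by linarith)
  have hweight : (k ^ 2) ^ ((3 - δ) / 2) ≤ (1 + S) ^ ((3 - δ) / 2) :=
    rpow_le_rpow (sq_nonneg k) (by linarith) (by linarith)
  have hsmooth := rpow_mul_exp_neg_mul_le (sq_nonneg k) (by positivity : 0 < ε ^ 2 * s)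
    (by linarith : 0 ≤ δ / 2) (by linarith)
  calc exp ((-(1 - (1 + ε * k) ^ 2) ^ 2 - 4 * Q) * s) * |-4 * ε ^ 4 * k ^ 3 - ε ^ 5 * k ^ 4|
      ≤ exp (-(k ^ 2 * (ε ^ 2 * s))) * (5 * ε ^ 4 * |k| ^ 3) :=
        mul_le_mul hexp (abs_multiplier_le hε.le hεk) (abs_nonneg _) (exp_nonneg _)
    _ = 5 * ε ^ 4 * (k ^ 2) ^ ((3 - δ) / 2) * ((k ^ 2) ^ (δ / 2) * exp (-(k ^ 2 * (ε ^ 2 * s)))) := by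
        rw [abs_pow_three_eq_rpow_mul_rpow k δ]; ring
    _ ≤ 5 * ε ^ 4 * (1 + S) ^ ((3 - δ) / 2) * (ε ^ 2 * s) ^ (-(δ / 2)) := by
        gcongr
        exact mul_nonneg (by positivity) (rpow_nonneg (by nlinarith [sq_nonneg k]) _)
    _ = 5 * ε ^ 4 * (ε ^ 2 * s) ^ (-(δ / 2)) * (1 + S) ^ ((3 - δ) / 2) := by ring

theorem one_le_wt {d : ℕ} {r : ℝ} (hr : 0 ≤ r) (K : Fin d → ℤ) : 1 ≤ wt d r K :=
  one_le_rpow (le_add_of_nonneg_right (by positivity)) (by positivity)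

theorem NormContOn.continuousOn_apply {d : ℕ} {r T₀ : ℝ} {B : ℝ → (Fin d → ℤ) → ℂ}
    (hB : NormContOn d r T₀ B) (hr : 0 ≤ r)
    (hS : ∀ T ∈ Icc (0 : ℝ) T₀, Summable fun K => ‖B T K‖ * wt d r K) (K : Fin d → ℤ) :
    ContinuousOn (fun T => B T K) (Icc 0 T₀) := by
  have hw : ∀ K, 0 ≤ wt d r K := fun K => zero_le_one.trans (one_le_wt hr K)
  rw [Metric.continuousOn_iff]
  intro T hT η hη
  obtain ⟨ν, hν, hclose⟩ := hB T hT η hη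
  refine ⟨ν, hν, fun T' hT' hTT' => ?_⟩
  have hsum : Summable fun K => ‖B T' K - B T K‖ * wt d r K :=
    ((hS T' hT').add (hS T hT)).of_nonneg_of_le (fun K => mul_nonneg (norm_nonneg _) (hw K))
      fun K => by rw [← add_mul]; exact mul_le_mul_of_nonneg_right (norm_sub_le _ _) (hw K)
  calc dist (B T' K) (B T K) = ‖B T' K - B T K‖ := dist_eq_norm _ _
    _ ≤ ‖B T' K - B T K‖ * wt d r K := le_mul_of_one_le_right (norm_nonneg _) (one_le_wt hr K)
    _ ≤ ∑' K, ‖B T' K - B T K‖ * wt d r K :=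
        hsum.le_tsum K fun K _ => mul_nonneg (norm_nonneg _) (hw K)
    _ < η := hclose T' hT' (by rwa [← Real.dist_eq])

theorem norm_mode_integrand_le {d : ℕ} (hd : 0 < d) {δ ε s : ℝ} (hδ0 : 0 ≤ δ) (hδ2 : δ ≤ 2)
    (hε : 0 < ε) (hs : 0 < s) (K : Fin d → ℤ) (hK : ε * √(∑ i, ((K i : ℝ)) ^ 2) ≤ 1) (b : ℂ) :
    ‖(exp ((-(1 - (1 + ε * (K ⟨0, hd⟩ : ℝ)) ^ 2) ^ 2
          - 4 * ∑ i ∈ Finset.univ.filter (fun i => i ≠ (⟨0, hd⟩ : Fin d)), (ε * (K i : ℝ)) ^ 2) * s)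
        * (-4 * ε ^ 4 * (K ⟨0, hd⟩ : ℝ) ^ 3 - ε ^ 5 * (K ⟨0, hd⟩ : ℝ) ^ 4)) • b‖ ≤
      5 * ε ^ 4 * (ε ^ 2 * s) ^ (-(δ / 2)) * (‖b‖ * wt d (3 - δ) K) := by
  have hkS : ((K ⟨0, hd⟩ : ℝ)) ^ 2 ≤ ∑ i, ((K i : ℝ)) ^ 2 :=
    Finset.single_le_sum (f := fun i => ((K i : ℝ)) ^ 2) (fun i _ => sq_nonneg _)
      (Finset.mem_univ _)
  have hεk : ε * |(K ⟨0, hd⟩ : ℝ)| ≤ 1 :=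
    (mul_le_mul_of_nonneg_left (abs_le_sqrt hkS) hε.le).trans hK
  have hQ : 0 ≤ ∑ i ∈ Finset.univ.filter (fun i => i ≠ (⟨0, hd⟩ : Fin d)), (ε * (K i : ℝ)) ^ 2 :=
    Finset.sum_nonneg fun i _ => sq_nonneg _
  rw [norm_smul, norm_mul, Real.norm_eq_abs, Real.norm_eq_abs, abs_exp, wt, mul_comm ‖b‖,
    ← mul_assoc]
  exact mul_le_mul_of_nonneg_right (exp_symbol_mul_abs_multiplier_le hε hs hδ0 hδ2 hkS hQ hεk)
    (norm_nonneg b)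

/-- the critical-mode Duhamel contribution of the linear residual
term involving the regular part `B̂ ∈ ℓ¹_{3−δ}` is `O(ε²)` on `[0, T₀/ε²]`.
Here `λ(e₁+εK) = −(1−(1+εK₁)²)² − 4Σ_{i≠1}(εK_i)²` and the multiplier is
`−4ε⁴K₁³ − ε⁵K₁⁴`; the sum runs over `ε|K| ≤ 1/10`. -/
theorem critical_linear_residual_B (d : ℕ) (hd : 0 < d)
    (δ T₀ CB : ℝ) (hδ0 : 0 < δ) (hδ1 : δ < 1) (hT₀ : 0 < T₀) (hCB : 0 < CB) :
    ∃ C > 0, ∃ ε₀ ∈ Set.Ioc (0 : ℝ) 1, ∀ ε ∈ Set.Ioc (0 : ℝ) ε₀,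
      ∀ B : ℝ → (Fin d → ℤ) → ℂ,
        NormContOn d (3 - δ) T₀ B →
        (∀ T ∈ Set.Icc (0 : ℝ) T₀, Summable (fun K => ‖B T K‖ * wt d (3 - δ) K)) →
        (∀ T ∈ Set.Icc (0 : ℝ) T₀, ∑' K : Fin d → ℤ, ‖B T K‖ * wt d (3 - δ) K ≤ CB) →
        ∀ t ∈ Set.Icc (0 : ℝ) (T₀ / ε ^ 2),
          (∑' K : Fin d → ℤ,
            if ε * Real.sqrt (∑ i, ((K i : ℝ)) ^ 2) ≤ 1 / 10 then
              ‖∫ τ in (0 : ℝ)..t,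
                (Real.exp ((-(1 - (1 + ε * (K ⟨0, hd⟩ : ℝ)) ^ 2) ^ 2
                      - 4 * ∑ i ∈ Finset.univ.filter (fun i => i ≠ (⟨0, hd⟩ : Fin d)),
                          (ε * (K i : ℝ)) ^ 2) * (t - τ))
                    * (-4 * ε ^ 4 * (K ⟨0, hd⟩ : ℝ) ^ 3
                      - ε ^ 5 * (K ⟨0, hd⟩ : ℝ) ^ 4)) • B (ε ^ 2 * τ) K‖
            else 0) ≤ C * ε ^ 2 := by
  refine ⟨5 * CB * T₀ ^ (1 - δ / 2) / (1 - δ / 2),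
    div_pos (by positivity) (by linarith), 1, ⟨one_pos, le_rfl⟩, ?_⟩
  rintro ε ⟨hε, -⟩ B hBc hBs hBle t ⟨ht, htT⟩
  have hslow : ∀ τ ∈ Icc 0 t, ε ^ 2 * τ ∈ Icc 0 T₀ := fun τ hτ =>
    ⟨mul_nonneg (sq_nonneg ε) hτ.1, (le_div_iff₀' (by positivity)).mp (hτ.2.trans htT)⟩
  -- `h t = 0` (Lean's `0 ^ (-c) = 0`), so the kernel bound is only available on `Ioo 0 t`.
  set h : ℝ → ℝ := fun τ => 5 * ε ^ 4 * (ε ^ 2 * (t - τ)) ^ (-(δ / 2))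
  set g : (Fin d → ℤ) → ℝ → ℝ := fun K τ => ‖B (ε ^ 2 * τ) K‖ * wt d (3 - δ) K
  have hh : IntervalIntegrable h volume 0 t :=
    (intervalIntegrable_rpow_mul_sub (by positivity) (by linarith) t).const_mul _
  have hh0 : ∀ τ ∈ Icc 0 t, 0 ≤ h τ := fun τ hτ =>
    mul_nonneg (by positivity) (rpow_nonneg (mul_nonneg (sq_nonneg ε) (sub_nonneg.2 hτ.2)) _)
  have hg0 : ∀ K τ, 0 ≤ g K τ := fun K τ =>
    mul_nonneg (norm_nonneg _) (zero_le_one.trans (one_le_wt (by linarith) K))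
  have hhg : ∀ K, IntervalIntegrable (fun τ => h τ * g K τ) volume 0 t := fun K =>
    hh.mul_continuousOn <| by
      rw [uIcc_of_le ht]
      exact (((hBc.continuousOn_apply (by linarith) hBs K).comp
        (continuous_const.mul continuous_id).continuousOn hslow).norm).mul continuousOn_const
  have hgCB : ∀ τ ∈ Icc 0 t, ∀ F : Finset (Fin d → ℤ), ∑ K ∈ F, g K τ ≤ CB := fun τ hτ F =>
    ((hBs _ (hslow τ hτ)).sum_le_tsum F fun K _ => hg0 K τ).trans (hBle _ (hslow τ hτ))
  refine (tsum_le_mul_intervalIntegral ht hh hh0 hhg hgCB fun K =>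
    ite_norm_intervalIntegral_le ht (hhg K) (fun τ hτ => mul_nonneg (hh0 τ hτ) (hg0 K τ))
      fun hK τ hτ => norm_mode_integrand_le hd hδ0.le (by linarith) hε (sub_pos.2 hτ.2) K
        (by linarith) _).trans (mul_integral_kernel_le hε.ne' ht ?_ (by linarith) hCB.le)
  exact (hslow t ⟨ht, le_rfl⟩).2
end

section
/- Let d ≥ 1, δ ∈ (0,1), T₀ > 0 and C_A > 0. Then there exist C > 0 and ε₀ ∈ (0,1] such that for every ε ∈ (0,ε₀], every continuous Â : [0,T₀] → ℓ¹_{1−δ}(ℤ^d) with sup_{T∈[0,T₀]} ‖Â(T)‖_{ℓ¹_{1−δ}} ≤ C_A, and every t ∈ [0, T₀/ε²]: ε³ Σ_{K∈ℤ^d, |εK + 2e₁| ≤ 1/10} |∫₀^t e^{λ(3e₁+εK)(t−τ)} (Â * Â * Â)(K, ε²τ) dτ| ≤ C ε^{2−δ}. -/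
/-- Discrete convolution on `ℤ^d`: `(û * v̂)(K) = Σ_L û(K−L) v̂(L)`. -/
noncomputable def dconv (d : ℕ) (u v : (Fin d → ℤ) → ℂ) (K : Fin d → ℤ) : ℂ :=
  ∑' L : Fin d → ℤ, u (K - L) * v L

/-!
On the support of the critical filter, `|εK₁ + 2| ≤ 1/10` forces `|εK| ≥ 1`, so the weight
`(1 + |K|²)^{(1-δ)/2}` is at least `ε^{-(1-δ)}`: the `ℓ¹_{1-δ}` norm absorbs a factor `ε^{1-δ}`.
Since `λ ≤ 0` the semigroup factor is at most `1`, and Young's inequality in `ℓ¹_r`, which follows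
from Peetre's inequality `⟨K⟩^r ≤ 2^{r/2} ⟨K - L⟩^r ⟨L⟩^r`, bounds the `ℓ¹_r` norm of `Â * Â * Â`
by `2^r C_A³`. Integrating over `[0, t]` with `t ≤ T₀/ε²` gives
`ε³ · ε^{1-δ} · 2^r C_A³ · T₀/ε² = 2^r C_A³ T₀ ε^{2-δ}`.
-/

open MeasureTheory
open scoped ENNReal

theorem wt_nonneg (d : ℕ) (r : ℝ) (K : Fin d → ℤ) : 0 ≤ wt d r K :=
  Real.rpow_nonneg (by positivity) _

theorem wt_le_two_rpow_mul_wt_sub_mul_wt {d : ℕ} {r : ℝ} (hr : 0 ≤ r) (K L : Fin d → ℤ) :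
    wt d r K ≤ 2 ^ (r / 2) * (wt d r (K - L) * wt d r L) := by
  have hsq : ∑ i, (K i : ℝ) ^ 2 ≤ 2 * ∑ i, ((K - L) i : ℝ) ^ 2 + 2 * ∑ i, (L i : ℝ) ^ 2 := by
    simp only [Finset.mul_sum, ← Finset.sum_add_distrib]
    refine Finset.sum_le_sum fun i _ => ?_
    push_cast [Pi.sub_apply]
    nlinarith [sq_nonneg ((K i : ℝ) - 2 * L i)]
  have hbase : 1 + ∑ i, (K i : ℝ) ^ 2
      ≤ 2 * ((1 + ∑ i, ((K - L) i : ℝ) ^ 2) * (1 + ∑ i, (L i : ℝ) ^ 2)) := by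
    have : 0 ≤ (∑ i, ((K - L) i : ℝ) ^ 2) * ∑ i, (L i : ℝ) ^ 2 := by positivity
    linarith
  unfold wt
  rw [← Real.mul_rpow (by positivity) (by positivity),
    ← Real.mul_rpow (by norm_num) (by positivity)]
  exact Real.rpow_le_rpow (by positivity) hbase (by positivity)

theorem ENNReal.tsum_tsum_sub_mul {G : Type*} [AddGroup G] (f g : G → ℝ≥0∞) :
    ∑' K, ∑' L, f (K - L) * g L = (∑' K, f K) * ∑' L, g L := by
  rw [ENNReal.tsum_comm, ← ENNReal.tsum_mul_left]
  refine tsum_congr fun L => ?_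
  rw [ENNReal.tsum_mul_right]
  exact congrArg (· * g L) ((Equiv.subRight L).tsum_eq f)

theorem enorm_dconv_le {d : ℕ} (u v : (Fin d → ℤ) → ℂ) (K : Fin d → ℤ) :
    ‖dconv d u v K‖ₑ ≤ ∑' L, ‖u (K - L)‖ₑ * ‖v L‖ₑ := by
  simpa only [dconv, enorm_mul] using enorm_tsum_le_tsum_enorm (f := fun L => u (K - L) * v L)

/-- The `ℓ¹_r` norm, valued in `ℝ≥0∞` so that it is meaningful without summability. -/
noncomputable def weightedL1Norm (d : ℕ) (r : ℝ) (u : (Fin d → ℤ) → ℂ) : ℝ≥0∞ :=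
  ∑' K, ‖u K‖ₑ * ENNReal.ofReal (wt d r K)

theorem weightedL1Norm_eq_ofReal_tsum {d : ℕ} {r : ℝ} {u : (Fin d → ℤ) → ℂ}
    (hu : Summable fun K => ‖u K‖ * wt d r K) :
    weightedL1Norm d r u = ENNReal.ofReal (∑' K, ‖u K‖ * wt d r K) := by
  rw [ENNReal.ofReal_tsum_of_nonneg (fun K => mul_nonneg (norm_nonneg _) (wt_nonneg d r K)) hu]
  refine tsum_congr fun K => ?_
  rw [ENNReal.ofReal_mul (norm_nonneg _), ofReal_norm]

theorem weightedL1Norm_dconv_le {d : ℕ} {r : ℝ} (hr : 0 ≤ r) (u v : (Fin d → ℤ) → ℂ) :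
    weightedL1Norm d r (dconv d u v)
      ≤ ENNReal.ofReal (2 ^ (r / 2)) * (weightedL1Norm d r u * weightedL1Norm d r v) := by
  set w : (Fin d → ℤ) → ℝ≥0∞ := fun K => ENNReal.ofReal (wt d r K)
  have hw (K L : Fin d → ℤ) : w K ≤ ENNReal.ofReal (2 ^ (r / 2)) * (w (K - L) * w L) := by
    simp only [w, ← ENNReal.ofReal_mul (wt_nonneg d r _),
      ← ENNReal.ofReal_mul (Real.rpow_nonneg zero_le_two _)]
    exact ENNReal.ofReal_le_ofReal (wt_le_two_rpow_mul_wt_sub_mul_wt hr K L)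
  calc weightedL1Norm d r (dconv d u v)
      ≤ ∑' K, ∑' L, ‖u (K - L)‖ₑ * ‖v L‖ₑ * w K := by
        simp only [weightedL1Norm]
        exact ENNReal.tsum_le_tsum fun K => by
          rw [ENNReal.tsum_mul_right]; gcongr; exact enorm_dconv_le u v K
    _ ≤ ∑' K, ∑' L, ENNReal.ofReal (2 ^ (r / 2))
          * ((‖u (K - L)‖ₑ * w (K - L)) * (‖v L‖ₑ * w L)) :=
        ENNReal.tsum_le_tsum fun K => ENNReal.tsum_le_tsum fun L =>
          (mul_le_mul' le_rfl (hw K L)).trans_eq (by ring)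
    _ = ENNReal.ofReal (2 ^ (r / 2)) * (weightedL1Norm d r u * weightedL1Norm d r v) := by
        simp only [ENNReal.tsum_mul_left, weightedL1Norm]
        rw [ENNReal.tsum_tsum_sub_mul (fun K => ‖u K‖ₑ * w K) (fun L => ‖v L‖ₑ * w L)]

theorem weightedL1Norm_cube_le {d : ℕ} {r : ℝ} (hr : 0 ≤ r) {u : (Fin d → ℤ) → ℂ} {M : ℝ}
    (hM : 0 ≤ M) (hu : weightedL1Norm d r u ≤ ENNReal.ofReal M) :
    weightedL1Norm d r (dconv d (dconv d u u) u)
      ≤ ENNReal.ofReal ((2 ^ (r / 2)) ^ 2 * M ^ 3) := by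
  have hc : (0 : ℝ) ≤ 2 ^ (r / 2) := Real.rpow_nonneg zero_le_two _
  calc weightedL1Norm d r (dconv d (dconv d u u) u)
      ≤ ENNReal.ofReal (2 ^ (r / 2)) * ((ENNReal.ofReal (2 ^ (r / 2))
          * (weightedL1Norm d r u * weightedL1Norm d r u)) * weightedL1Norm d r u) :=
        (weightedL1Norm_dconv_le hr _ _).trans (by gcongr; exact weightedL1Norm_dconv_le hr _ _)
    _ ≤ ENNReal.ofReal (2 ^ (r / 2)) * ((ENNReal.ofReal (2 ^ (r / 2))
          * (ENNReal.ofReal M * ENNReal.ofReal M)) * ENNReal.ofReal M) := by gcongr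
    _ = ENNReal.ofReal ((2 ^ (r / 2)) ^ 2 * M ^ 3) := by
        simp only [← ENNReal.ofReal_mul hc, ← ENNReal.ofReal_mul hM,
          ← ENNReal.ofReal_mul (mul_nonneg hc (mul_nonneg hM hM))]
        ring_nf

theorem one_le_rpow_mul_wt {d : ℕ} {r ε : ℝ} (hr : 0 ≤ r) (hε : 0 < ε) {K : Fin d → ℤ}
    (i : Fin d) (hK : 1 ≤ (ε * K i) ^ 2) : 1 ≤ ε ^ r * wt d r K := by
  have hKi : (K i : ℝ) ^ 2 ≤ ∑ j, (K j : ℝ) ^ 2 :=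
    Finset.single_le_sum (f := fun j => (K j : ℝ) ^ 2) (fun j _ => sq_nonneg _)
      (Finset.mem_univ i)
  have hεr : ε ^ r = (ε ^ 2) ^ (r / 2) := by
    rw [← Real.rpow_natCast, ← Real.rpow_mul hε.le]; congr 1; ring
  rw [wt, hεr, ← Real.mul_rpow (by positivity) (by positivity)]
  exact Real.one_le_rpow (by nlinarith) (by positivity)

theorem one_le_sq_of_critical_filter {d : ℕ} {ε : ℝ} {K : Fin d → ℤ} (i₀ : Fin d)
    (hK : Real.sqrt (∑ i, (ε * (K i : ℝ) + if i = i₀ then 2 else 0) ^ 2) ≤ 1 / 10) :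
    1 ≤ (ε * K i₀) ^ 2 := by
  rw [Real.sqrt_le_left (by norm_num)] at hK
  have hi₀ := Finset.single_le_sum (f := fun i => (ε * (K i : ℝ) + if i = i₀ then 2 else 0) ^ 2)
    (fun i _ => sq_nonneg _) (Finset.mem_univ i₀)
  simp only [↓reduceIte] at hi₀
  nlinarith

/-- Unlike `lintegral_tsum`, this needs no measurability. -/
theorem MeasureTheory.tsum_lintegral_le_lintegral_tsum {α ι : Type*} [MeasurableSpace α]
    {μ : Measure α} (f : ι → α → ℝ≥0∞) :
    ∑' i, ∫⁻ a, f i a ∂μ ≤ ∫⁻ a, ∑' i, f i a ∂μ := by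
  classical
  have hfin (s : Finset ι) : ∑ i ∈ s, ∫⁻ a, f i a ∂μ ≤ ∫⁻ a, ∑ i ∈ s, f i a ∂μ := by
    induction s using Finset.induction_on with
    | empty => simp
    | insert i s hi ih =>
      simp only [Finset.sum_insert hi]
      exact (add_le_add le_rfl ih).trans (le_lintegral_add _ _)
  rw [ENNReal.tsum_eq_iSup_sum]
  exact iSup_le fun s => (hfin s).trans (lintegral_mono fun a => ENNReal.sum_le_tsum s)

theorem enorm_integral_exp_smul_le {lam t : ℝ} (hlam : lam ≤ 0) (ht : 0 ≤ t) (F : ℝ → ℂ) :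
    ‖∫ τ in (0 : ℝ)..t, Real.exp (lam * (t - τ)) • F τ‖ₑ ≤ ∫⁻ τ in Set.Ioc 0 t, ‖F τ‖ₑ := by
  rw [intervalIntegral.integral_of_le ht]
  refine (enorm_integral_le_lintegral_enorm _).trans (setLIntegral_mono' measurableSet_Ioc ?_)
  rintro τ ⟨-, hτ⟩
  rw [enorm_smul]
  refine mul_le_of_le_one_left' ?_
  rw [← ofReal_norm, Real.norm_of_nonneg (Real.exp_nonneg _)]
  exact ENNReal.ofReal_le_one.2
    (Real.exp_le_one_iff.2 (mul_nonpos_of_nonpos_of_nonneg hlam (by linarith)))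

theorem tsum_le_of_tsum_ofReal_le {ι : Type*} {g : ι → ℝ} {B : ℝ} (hg : ∀ i, 0 ≤ g i)
    (hB : 0 ≤ B) (h : ∑' i, ENNReal.ofReal (g i) ≤ ENNReal.ofReal B) : ∑' i, g i ≤ B := by
  have := ENNReal.toReal_mono ENNReal.ofReal_ne_top h
  rwa [ENNReal.tsum_toReal_eq fun _ => ENNReal.ofReal_ne_top, ENNReal.toReal_ofReal hB,
    tsum_congr fun i => ENNReal.toReal_ofReal (hg i)] at this

theorem tsum_ite_norm_integral_exp_smul_le {d : ℕ} {r ε t M : ℝ} (hε : 0 ≤ ε) (ht : 0 ≤ t)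
    (hM : 0 ≤ M) (P : (Fin d → ℤ) → Prop) [DecidablePred P]
    (hP : ∀ K, P K → 1 ≤ ε ^ r * wt d r K) {lam : (Fin d → ℤ) → ℝ} (hlam : ∀ K, lam K ≤ 0)
    (F : (Fin d → ℤ) → ℝ → ℂ)
    (hF : ∀ τ ∈ Set.Ioc 0 t, weightedL1Norm d r (fun K => F K τ) ≤ ENNReal.ofReal M) :
    ∑' K, (if P K then ‖∫ τ in (0 : ℝ)..t, Real.exp (lam K * (t - τ)) • F K τ‖ else 0)
      ≤ ε ^ r * (M * t) := by
  have hεr : 0 ≤ ε ^ r := Real.rpow_nonneg hε r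
  set c := ENNReal.ofReal (ε ^ r)
  have hK (K : Fin d → ℤ) :
      ENNReal.ofReal (if P K then ‖∫ τ in (0 : ℝ)..t, Real.exp (lam K * (t - τ)) • F K τ‖ else 0)
        ≤ c * ∫⁻ τ in Set.Ioc 0 t, ‖F K τ‖ₑ * ENNReal.ofReal (wt d r K) := by
    split_ifs with hPK
    · rw [ofReal_norm, lintegral_mul_const' _ _ ENNReal.ofReal_ne_top,
        mul_comm _ (ENNReal.ofReal _), ← mul_assoc, ← ENNReal.ofReal_mul hεr]
      calc _ ≤ ∫⁻ τ in Set.Ioc 0 t, ‖F K τ‖ₑ := enorm_integral_exp_smul_le (hlam K) ht _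
        _ ≤ _ := le_mul_of_one_le_left' (ENNReal.one_le_ofReal.2 (hP K hPK))
    · simp
  refine tsum_le_of_tsum_ofReal_le (fun K => by split_ifs <;> positivity) (by positivity) ?_
  calc _ ≤ ∑' K, c * ∫⁻ τ in Set.Ioc 0 t, ‖F K τ‖ₑ * ENNReal.ofReal (wt d r K) :=
        ENNReal.tsum_le_tsum hK
    _ ≤ c * ∫⁻ τ in Set.Ioc 0 t, ∑' K, ‖F K τ‖ₑ * ENNReal.ofReal (wt d r K) := by
        rw [ENNReal.tsum_mul_left]
        gcongr
        exact tsum_lintegral_le_lintegral_tsum _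
    _ ≤ c * ∫⁻ _ in Set.Ioc 0 t, ENNReal.ofReal M :=
        mul_le_mul' le_rfl (setLIntegral_mono' measurableSet_Ioc hF)
    _ = ENNReal.ofReal (ε ^ r * (M * t)) := by
        rw [setLIntegral_const, Real.volume_Ioc, sub_zero, ← ENNReal.ofReal_mul hM,
          ← ENNReal.ofReal_mul hεr]

theorem critical_cubic_residual_general (d : ℕ) (hd : 0 < d)
    (δ T₀ CA : ℝ) (hδ1 : δ < 1) (hT₀ : 0 < T₀) (hCA : 0 < CA) :
    ∃ C > 0, ∃ ε₀ ∈ Set.Ioc (0 : ℝ) 1, ∀ ε ∈ Set.Ioc (0 : ℝ) ε₀,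
      ∀ A : ℝ → (Fin d → ℤ) → ℂ,
        NormContOn d (1 - δ) T₀ A →
        (∀ T ∈ Set.Icc (0 : ℝ) T₀, Summable (fun K => ‖A T K‖ * wt d (1 - δ) K)) →
        (∀ T ∈ Set.Icc (0 : ℝ) T₀, ∑' K : Fin d → ℤ, ‖A T K‖ * wt d (1 - δ) K ≤ CA) →
        ∀ t ∈ Set.Icc (0 : ℝ) (T₀ / ε ^ 2),
          ε ^ 3 * (∑' K : Fin d → ℤ,
            if Real.sqrt (∑ i, (ε * (K i : ℝ)
                + if i = (⟨0, hd⟩ : Fin d) then 2 else 0) ^ 2) ≤ 1 / 10 then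
              ‖∫ τ in (0 : ℝ)..t,
                (Real.exp ((-(1 - (3 + ε * (K ⟨0, hd⟩ : ℝ)) ^ 2) ^ 2
                      - 4 * ∑ i ∈ Finset.univ.filter (fun i => i ≠ (⟨0, hd⟩ : Fin d)),
                          (ε * (K i : ℝ)) ^ 2) * (t - τ))) •
                  dconv d (dconv d (A (ε ^ 2 * τ)) (A (ε ^ 2 * τ))) (A (ε ^ 2 * τ)) K‖
            else 0) ≤ C * ε ^ ((2 : ℝ) - δ) := by
  have hr : 0 ≤ 1 - δ := by linarith
  set M := ((2 : ℝ) ^ ((1 - δ) / 2)) ^ 2 * CA ^ 3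
  refine ⟨M * T₀, by positivity, 1, ⟨one_pos, le_rfl⟩, ?_⟩
  rintro ε ⟨hε, -⟩ A - hsum hbd t ⟨ht, htT⟩
  have hε2t : ε ^ 2 * t ≤ T₀ := by rwa [le_div_iff₀ (by positivity), mul_comm] at htT
  have hslow (τ : ℝ) (hτ : τ ∈ Set.Ioc 0 t) : ε ^ 2 * τ ∈ Set.Icc 0 T₀ :=
    ⟨by have := hτ.1.le; positivity, (by gcongr; exact hτ.2 : ε ^ 2 * τ ≤ ε ^ 2 * t).trans hε2t⟩
  calc _ ≤ ε ^ 3 * (ε ^ (1 - δ) * (M * t)) := by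
        gcongr
        refine tsum_ite_norm_integral_exp_smul_le hε.le ht (by positivity) _
          (fun K hK => one_le_rpow_mul_wt hr hε _ (one_le_sq_of_critical_filter _ hK))
          (fun K => ?_) _ (fun τ hτ => weightedL1Norm_cube_le hr hCA.le ?_)
        · have : 0 ≤ ∑ i ∈ Finset.univ.filter (fun i => i ≠ (⟨0, hd⟩ : Fin d)),
              (ε * (K i : ℝ)) ^ 2 := by positivity
          linarith [sq_nonneg (1 - (3 + ε * (K ⟨0, hd⟩ : ℝ)) ^ 2)]
        · rw [weightedL1Norm_eq_ofReal_tsum (hsum _ (hslow τ hτ))]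
          exact ENNReal.ofReal_le_ofReal (hbd _ (hslow τ hτ))
    _ = M * ε ^ ((2 : ℝ) - δ) * (ε ^ 2 * t) := by
        have : ε ^ 3 * ε ^ (1 - δ) = ε ^ ((2 : ℝ) - δ) * ε ^ 2 := by
          simp only [← Real.rpow_natCast, ← Real.rpow_add hε]
          ring_nf
        linear_combination (M * t) * this
    _ ≤ M * T₀ * ε ^ ((2 : ℝ) - δ) := by
        rw [mul_right_comm]; gcongr

/-- the critical-mode Duhamel contribution of the cubic residual
term `ε³A³e^{3ix₁}` (wave vectors `k = 3e₁ + εK` with `|k − e₁| ≤ 1/10`, i.e.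
`|εK + 2e₁| ≤ 1/10`) is `O(ε^{2−δ})` on `[0, T₀/ε²]`, for `Â ∈ ℓ¹_{1−δ}`. -/
theorem critical_cubic_residual (d : ℕ) (hd : 0 < d)
    (δ T₀ CA : ℝ) (hδ0 : 0 < δ) (hδ1 : δ < 1) (hT₀ : 0 < T₀) (hCA : 0 < CA) :
    ∃ C > 0, ∃ ε₀ ∈ Set.Ioc (0 : ℝ) 1, ∀ ε ∈ Set.Ioc (0 : ℝ) ε₀,
      ∀ A : ℝ → (Fin d → ℤ) → ℂ,
        NormContOn d (1 - δ) T₀ A →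
        (∀ T ∈ Set.Icc (0 : ℝ) T₀, Summable (fun K => ‖A T K‖ * wt d (1 - δ) K)) →
        (∀ T ∈ Set.Icc (0 : ℝ) T₀, ∑' K : Fin d → ℤ, ‖A T K‖ * wt d (1 - δ) K ≤ CA) →
        ∀ t ∈ Set.Icc (0 : ℝ) (T₀ / ε ^ 2),
          ε ^ 3 * (∑' K : Fin d → ℤ,
            if Real.sqrt (∑ i, (ε * (K i : ℝ)
                + if i = (⟨0, hd⟩ : Fin d) then 2 else 0) ^ 2) ≤ 1 / 10 then
              ‖∫ τ in (0 : ℝ)..t,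
                (Real.exp ((-(1 - (3 + ε * (K ⟨0, hd⟩ : ℝ)) ^ 2) ^ 2
                      - 4 * ∑ i ∈ Finset.univ.filter (fun i => i ≠ (⟨0, hd⟩ : Fin d)),
                          (ε * (K i : ℝ)) ^ 2) * (t - τ))) •
                  dconv d (dconv d (A (ε ^ 2 * τ)) (A (ε ^ 2 * τ))) (A (ε ^ 2 * τ)) K‖
            else 0) ≤ C * ε ^ ((2 : ℝ) - δ) :=
  critical_cubic_residual_general d hd δ T₀ CA hδ1 hT₀ hCA
end

section
/- Let d ≥ 1, T₀ > 0 and C_A > 0. Then there exist C > 0 and ε₀ ∈ (0,1] such that for every ε ∈ (0,ε₀], every continuous Â : [0,T₀] → ℓ¹(ℤ^d) with sup_{T∈[0,T₀]} ‖Â(T)‖_{ℓ¹} ≤ C_A, and every t ∈ [0, T₀/ε²]: ε³ Σ_{K∈ℤ^d, |εK+2e₁| ≥ 1/10 and |εK+4e₁| ≥ 1/10} |∫₀^t e^{λ(3e₁+εK)(t−τ)} (Â * Â * Â)(K, ε²τ) dτ| ≤ C ε³. -/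
/-- ℓ¹-bound for the discrete convolution. -/
lemma conv_l1 {d : ℕ} {u v : (Fin d → ℤ) → ℂ}
    (hu : Summable fun K => ‖u K‖) (hv : Summable fun K => ‖v K‖) :
    Summable (fun K => ‖dconv d u v K‖) ∧
      ∑' K, ‖dconv d u v K‖ ≤ (∑' K, ‖u K‖) * (∑' K, ‖v K‖) := by
  classical
  set F : ((Fin d → ℤ) × (Fin d → ℤ)) → ℝ := fun p => ‖u (p.1 - p.2)‖ * ‖v p.2‖ with hFdef
  have hbase : Summable fun p : (Fin d → ℤ) × (Fin d → ℤ) => ‖u p.1‖ * ‖v p.2‖ :=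
    hu.mul_of_nonneg hv (fun _ => norm_nonneg _) (fun _ => norm_nonneg _)
  let e : ((Fin d → ℤ) × (Fin d → ℤ)) ≃ ((Fin d → ℤ) × (Fin d → ℤ)) :=
    { toFun := fun p => (p.1 + p.2, p.2)
      invFun := fun p => (p.1 - p.2, p.2)
      left_inv := fun p => by simp
      right_inv := fun p => by simp }
  have hFe : Summable (F ∘ e) := by
    have : (F ∘ e) = fun p : (Fin d → ℤ) × (Fin d → ℤ) => ‖u p.1‖ * ‖v p.2‖ := by
      funext p; simp [hFdef, e]
    rw [this]; exact hbase
  have hF : Summable F := e.summable_iff.mp hFe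
  have hFnn : 0 ≤ F := fun p => mul_nonneg (norm_nonneg _) (norm_nonneg _)
  have hrow : ∀ K : (Fin d → ℤ), Summable fun L => F (K, L) := fun K => hF.prod_factor K
  have hnormrow : ∀ K : (Fin d → ℤ), ‖dconv d u v K‖ ≤ ∑' L, F (K, L) := by
    intro K
    have hs : Summable fun L => ‖u (K - L) * v L‖ := by
      simpa [hFdef, norm_mul] using hrow K
    calc ‖dconv d u v K‖ ≤ ∑' L, ‖u (K - L) * v L‖ := norm_tsum_le_tsum_norm hs
      _ = ∑' L, F (K, L) := by simp [hFdef, norm_mul]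
  have hcol : Summable fun K : (Fin d → ℤ) => ∑' L, F (K, L) :=
    ((summable_prod_of_nonneg hFnn).mp hF).2
  have hsum1 : Summable (fun K => ‖dconv d u v K‖) :=
    Summable.of_nonneg_of_le (fun _ => norm_nonneg _) hnormrow hcol
  refine ⟨hsum1, ?_⟩
  calc ∑' K, ‖dconv d u v K‖ ≤ ∑' K, ∑' L, F (K, L) := Summable.tsum_le_tsum hnormrow hsum1 hcol
    _ = ∑' p, F p := (Summable.tsum_prod hF).symm
    _ = ∑' p : (Fin d → ℤ) × (Fin d → ℤ), ‖u p.1‖ * ‖v p.2‖ := by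
        rw [← e.tsum_eq F]
        apply tsum_congr; intro p; simp [hFdef, e]
    _ = (∑' K, ‖u K‖) * (∑' K, ‖v K‖) := by
        rw [Summable.tsum_prod hbase]
        simp [tsum_mul_left, tsum_mul_right]

/-- The uniform spectral gap on the stable set. -/
lemma lam_le (a b : ℝ) (hb : 0 ≤ b) (h2 : 1 / 100 ≤ (a + 2) ^ 2 + b)
    (h4 : 1 / 100 ≤ (a + 4) ^ 2 + b) :
    -(1 - (3 + a) ^ 2) ^ 2 - 4 * b ≤ -(9 / 160000) := by
  rcases le_or_gt (1 / 400) b with hb' | hb'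
  · nlinarith [sq_nonneg (1 - (3 + a) ^ 2)]
  · have h2' : (3 : ℝ) / 400 ≤ (a + 2) ^ 2 := by linarith
    have h4' : (3 : ℝ) / 400 ≤ (a + 4) ^ 2 := by linarith
    have key : (3 / 400 : ℝ) * (3 / 400) ≤ (a + 2) ^ 2 * ((a + 4) ^ 2) :=
      mul_le_mul h2' h4' (by norm_num) (by positivity)
    have hsq : (1 - (3 + a) ^ 2) ^ 2 = (a + 2) ^ 2 * ((a + 4) ^ 2) := by ring
    nlinarith
  
/-- The exponential integral bound. -/
lemma exp_int_le (σ t : ℝ) (hσ : 0 < σ) :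
    (∫ τ in (0 : ℝ)..t, Real.exp (-σ * (t - τ))) ≤ 1 / σ := by
  have h1 : ∀ x : ℝ, HasDerivAt (fun τ : ℝ => -σ * (t - τ)) σ x := by
    intro x
    have := ((hasDerivAt_id x).const_sub t).const_mul (-σ)
    simpa using this
  have hder : ∀ x ∈ Set.uIcc (0 : ℝ) t,
      HasDerivAt (fun τ : ℝ => Real.exp (-σ * (t - τ)) / σ) (Real.exp (-σ * (t - x))) x := by
    intro x _
    have h := ((h1 x).exp).div_const σ
    have : Real.exp (-σ * (t - x)) * σ / σ = Real.exp (-σ * (t - x)) := by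
      field_simp
    rwa [this] at h
  have hint : IntervalIntegrable (fun τ : ℝ => Real.exp (-σ * (t - τ)))
      MeasureTheory.volume 0 t := by
    apply Continuous.intervalIntegrable
    exact Real.continuous_exp.comp (continuous_const.mul (continuous_const.sub continuous_id))
  rw [intervalIntegral.integral_eq_sub_of_hasDerivAt hder hint]
  have h0 : (0 : ℝ) < Real.exp (-σ * (t - 0)) / σ := by positivity
  have : Real.exp (-σ * (t - t)) = 1 := by simp
  rw [this]
  linarith



/-- the stable-mode Duhamel contribution of the cubic residual
term `ε³A³e^{3ix₁}` (wave vectors `k = 3e₁ + εK` with `|k − e₁| ≥ 1/10` and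
`|k + e₁| ≥ 1/10`, i.e. `|εK + 2e₁| ≥ 1/10` and `|εK + 4e₁| ≥ 1/10`) is
`O(ε³)` uniformly on `[0, T₀/ε²]`, for `Â ∈ ℓ¹`. -/
theorem stable_cubic_residual (d : ℕ) (hd : 0 < d)
    (T₀ CA : ℝ) (hT₀ : 0 < T₀) (hCA : 0 < CA) :
    ∃ C > 0, ∃ ε₀ ∈ Set.Ioc (0 : ℝ) 1, ∀ ε ∈ Set.Ioc (0 : ℝ) ε₀,
      ∀ A : ℝ → (Fin d → ℤ) → ℂ,
        NormContOn d 0 T₀ A →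
        (∀ T ∈ Set.Icc (0 : ℝ) T₀, Summable (fun K : Fin d → ℤ => ‖A T K‖)) →
        (∀ T ∈ Set.Icc (0 : ℝ) T₀, ∑' K : Fin d → ℤ, ‖A T K‖ ≤ CA) →
        ∀ t ∈ Set.Icc (0 : ℝ) (T₀ / ε ^ 2),
          ε ^ 3 * (∑' K : Fin d → ℤ,
            if (1 / 10 ≤ Real.sqrt (∑ i, (ε * (K i : ℝ)
                  + if i = (⟨0, hd⟩ : Fin d) then 2 else 0) ^ 2)
                ∧ 1 / 10 ≤ Real.sqrt (∑ i, (ε * (K i : ℝ)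
                  + if i = (⟨0, hd⟩ : Fin d) then 4 else 0) ^ 2)) then
              ‖∫ τ in (0 : ℝ)..t,
                (Real.exp ((-(1 - (3 + ε * (K ⟨0, hd⟩ : ℝ)) ^ 2) ^ 2
                      - 4 * ∑ i ∈ Finset.univ.filter (fun i => i ≠ (⟨0, hd⟩ : Fin d)),
                          (ε * (K i : ℝ)) ^ 2) * (t - τ))) •
                  dconv d (dconv d (A (ε ^ 2 * τ)) (A (ε ^ 2 * τ))) (A (ε ^ 2 * τ)) K‖
            else 0) ≤ C * ε ^ 3 := by
  classical
  refine ⟨CA ^ 3 * (160000 / 9), by positivity, 1, ⟨zero_lt_one, le_rfl⟩, ?_⟩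
  rintro ε ⟨hε0, hε1⟩ A _hcont hsummA hboundA t ⟨ht0, htT⟩
  rw [mul_comm (CA ^ 3 * (160000 / 9)) (ε ^ 3)]
  refine mul_le_mul_of_nonneg_left ?_ (by positivity)
  set i0 : Fin d := ⟨0, hd⟩ with hi0
  set g : ℝ → (Fin d → ℤ) → ℂ := fun T => dconv d (dconv d (A T) (A T)) (A T) with hgdef
  -- the time interval maps into [0, T₀]
  have hTmem : ∀ τ ∈ Set.Icc (0 : ℝ) t, ε ^ 2 * τ ∈ Set.Icc (0 : ℝ) T₀ := by
    intro τ hτ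
    have hε2 : (0 : ℝ) < ε ^ 2 := by positivity
    constructor
    · exact mul_nonneg hε2.le hτ.1
    · calc ε ^ 2 * τ ≤ ε ^ 2 * t := mul_le_mul_of_nonneg_left hτ.2 hε2.le
        _ ≤ ε ^ 2 * (T₀ / ε ^ 2) := mul_le_mul_of_nonneg_left htT hε2.le
        _ = T₀ := by rw [mul_comm, div_mul_cancel₀ _ (ne_of_gt hε2)]
  -- ℓ¹ bound on the cubic term
  have hg : ∀ τ ∈ Set.Icc (0 : ℝ) t,
      Summable (fun K => ‖g (ε ^ 2 * τ) K‖) ∧ ∑' K, ‖g (ε ^ 2 * τ) K‖ ≤ CA ^ 3 := by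
    intro τ hτ
    have hmem := hTmem τ hτ
    have hA := hsummA _ hmem
    have hAb := hboundA _ hmem
    obtain ⟨h1, h1b⟩ := conv_l1 hA hA
    obtain ⟨h2, h2b⟩ := conv_l1 h1 hA
    refine ⟨h2, h2b.trans ?_⟩
    have hAnn : 0 ≤ ∑' K, ‖A (ε ^ 2 * τ) K‖ := tsum_nonneg fun _ => norm_nonneg _
    calc (∑' K, ‖dconv d (A (ε ^ 2 * τ)) (A (ε ^ 2 * τ)) K‖) * (∑' K, ‖A (ε ^ 2 * τ) K‖)
        ≤ ((∑' K, ‖A (ε ^ 2 * τ) K‖) * (∑' K, ‖A (ε ^ 2 * τ) K‖)) * (∑' K, ‖A (ε ^ 2 * τ) K‖) :=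
          mul_le_mul_of_nonneg_right h1b hAnn
      _ ≤ (CA * CA) * CA :=
          mul_le_mul (mul_le_mul hAb hAb hAnn hCA.le) hAb hAnn (by positivity)
      _ = CA ^ 3 := by ring
  -- the spectral gap on the stable set
  have hlam : ∀ K : Fin d → ℤ,
      (1 / 10 ≤ Real.sqrt (∑ i, (ε * (K i : ℝ) + if i = i0 then 2 else 0) ^ 2)
        ∧ 1 / 10 ≤ Real.sqrt (∑ i, (ε * (K i : ℝ) + if i = i0 then 4 else 0) ^ 2)) →
      (-(1 - (3 + ε * (K i0 : ℝ)) ^ 2) ^ 2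
        - 4 * ∑ i ∈ Finset.univ.filter (fun i => i ≠ i0), (ε * (K i : ℝ)) ^ 2)
        ≤ -(9 / 160000) := by
    intro K hK
    have hdecomp : ∀ c : ℝ, (∑ i, (ε * (K i : ℝ) + if i = i0 then c else 0) ^ 2)
        = (ε * (K i0 : ℝ) + c) ^ 2
          + ∑ i ∈ Finset.univ.filter (fun i => i ≠ i0), (ε * (K i : ℝ)) ^ 2 := by
      intro c
      rw [Finset.filter_ne', ← Finset.add_sum_erase Finset.univ
        (fun i => (ε * (K i : ℝ) + if i = i0 then c else 0) ^ 2) (Finset.mem_univ i0)]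
      rw [if_pos rfl]
      congr 1
      exact Finset.sum_congr rfl fun i hi => by
        rw [if_neg (Finset.ne_of_mem_erase hi)]; ring
    have hb : 0 ≤ ∑ i ∈ Finset.univ.filter (fun i => i ≠ i0), (ε * (K i : ℝ)) ^ 2 :=
      Finset.sum_nonneg fun i _ => sq_nonneg _
    have hsq : ∀ c : ℝ, 1 / 10 ≤ Real.sqrt (∑ i, (ε * (K i : ℝ) + if i = i0 then c else 0) ^ 2) →
        1 / 100 ≤ (ε * (K i0 : ℝ) + c) ^ 2
          + ∑ i ∈ Finset.univ.filter (fun i => i ≠ i0), (ε * (K i : ℝ)) ^ 2 := by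
      intro c hc
      have hnn : 0 ≤ ∑ i, (ε * (K i : ℝ) + if i = i0 then c else 0) ^ 2 :=
        Finset.sum_nonneg fun i _ => sq_nonneg _
      calc (1 / 100 : ℝ) = (1 / 10) ^ 2 := by norm_num
        _ ≤ (Real.sqrt (∑ i, (ε * (K i : ℝ) + if i = i0 then c else 0) ^ 2)) ^ 2 :=
            pow_le_pow_left₀ (by norm_num) hc 2
        _ = ∑ i, (ε * (K i : ℝ) + if i = i0 then c else 0) ^ 2 := Real.sq_sqrt hnn
        _ = _ := hdecomp c
    exact lam_le (ε * (K i0 : ℝ)) _ hb (hsq 2 hK.1) (hsq 4 hK.2)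
  -- partial sums bound
  have hpartial : ∀ s : Finset (Fin d → ℤ),
      (∑ K ∈ s,
        if (1 / 10 ≤ Real.sqrt (∑ i, (ε * (K i : ℝ) + if i = i0 then 2 else 0) ^ 2)
            ∧ 1 / 10 ≤ Real.sqrt (∑ i, (ε * (K i : ℝ) + if i = i0 then 4 else 0) ^ 2)) then
          ‖∫ τ in (0 : ℝ)..t,
            (Real.exp ((-(1 - (3 + ε * (K i0 : ℝ)) ^ 2) ^ 2
                  - 4 * ∑ i ∈ Finset.univ.filter (fun i => i ≠ i0),
                      (ε * (K i : ℝ)) ^ 2) * (t - τ))) • g (ε ^ 2 * τ) K‖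
        else 0) ≤ CA ^ 3 * (160000 / 9) := by
    intro s
    set f : (Fin d → ℤ) → ℝ → ℂ := fun K τ =>
      (Real.exp ((-(1 - (3 + ε * (K i0 : ℝ)) ^ 2) ^ 2
            - 4 * ∑ i ∈ Finset.univ.filter (fun i => i ≠ i0),
                (ε * (K i : ℝ)) ^ 2) * (t - τ))) • g (ε ^ 2 * τ) K with hfdef
    set P : (Fin d → ℤ) → Prop := fun K =>
      ((1 / 10 ≤ Real.sqrt (∑ i, (ε * (K i : ℝ) + if i = i0 then 2 else 0) ^ 2)
          ∧ 1 / 10 ≤ Real.sqrt (∑ i, (ε * (K i : ℝ) + if i = i0 then 4 else 0) ^ 2))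
        ∧ IntervalIntegrable (f K) MeasureTheory.volume 0 t) with hPdef
    have hfuntrue : ∀ K, P K →
        (fun τ => if P K then ‖f K τ‖ else 0) = fun τ => ‖f K τ‖ := by
      intro K hP; funext τ; rw [if_pos hP]
    have hfunfalse : ∀ K, ¬ P K →
        (fun τ => if P K then ‖f K τ‖ else 0) = fun _ => (0 : ℝ) := by
      intro K hP; funext τ; rw [if_neg hP]
    have hintP : ∀ K, IntervalIntegrable (fun τ => if P K then ‖f K τ‖ else 0)
        MeasureTheory.volume 0 t := by
      intro K
      by_cases hP : P K
      · rw [hfuntrue K hP]; exact hP.2.norm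
      · rw [hfunfalse K hP]; exact intervalIntegrable_const
    calc (∑ K ∈ s,
        if (1 / 10 ≤ Real.sqrt (∑ i, (ε * (K i : ℝ) + if i = i0 then 2 else 0) ^ 2)
            ∧ 1 / 10 ≤ Real.sqrt (∑ i, (ε * (K i : ℝ) + if i = i0 then 4 else 0) ^ 2)) then
          ‖∫ τ in (0 : ℝ)..t, f K τ‖ else 0)
        ≤ ∑ K ∈ s, if P K then (∫ τ in (0 : ℝ)..t, ‖f K τ‖) else 0 := by
          refine Finset.sum_le_sum fun K _ => ?_
          by_cases hc : (1 / 10 ≤ Real.sqrt (∑ i, (ε * (K i : ℝ)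
              + if i = i0 then 2 else 0) ^ 2)
            ∧ 1 / 10 ≤ Real.sqrt (∑ i, (ε * (K i : ℝ) + if i = i0 then 4 else 0) ^ 2))
          · by_cases hi : IntervalIntegrable (f K) MeasureTheory.volume 0 t
            · rw [if_pos hc, if_pos (show P K from ⟨hc, hi⟩)]
              exact intervalIntegral.norm_integral_le_integral_norm ht0
            · rw [if_pos hc, if_neg (show ¬ P K from fun h => hi h.2)]
              rw [intervalIntegral.integral_undef hi, norm_zero]
          · rw [if_neg hc, if_neg (show ¬ P K from fun h => hc h.1)]
      _ = ∑ K ∈ s, ∫ τ in (0 : ℝ)..t, (if P K then ‖f K τ‖ else 0) := by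
          refine Finset.sum_congr rfl fun K _ => ?_
          by_cases hP : P K
          · rw [if_pos hP, hfuntrue K hP]
          · rw [if_neg hP, hfunfalse K hP, intervalIntegral.integral_const, smul_zero]
      _ = ∫ τ in (0 : ℝ)..t, ∑ K ∈ s, (if P K then ‖f K τ‖ else 0) :=
          (intervalIntegral.integral_finset_sum fun K _ => hintP K).symm
      _ ≤ ∫ τ in (0 : ℝ)..t, CA ^ 3 * Real.exp (-(9 / 160000) * (t - τ)) := by
          have hsumint : IntervalIntegrable
              (fun τ => ∑ K ∈ s, (if P K then ‖f K τ‖ else 0)) MeasureTheory.volume 0 t := by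
            have h := IntervalIntegrable.sum s fun K (_ : K ∈ s) => hintP K
            have heq : (∑ K ∈ s, fun τ => if P K then ‖f K τ‖ else 0)
                = fun τ => ∑ K ∈ s, (if P K then ‖f K τ‖ else 0) := by
              funext τ; rw [Finset.sum_apply]
            rwa [heq] at h
          refine intervalIntegral.integral_mono_on ht0 hsumint
            (Continuous.intervalIntegrable (by fun_prop) _ _) ?_
          intro τ hτ
          have hg' := hg τ hτ
          have hexp_nn : (0 : ℝ) ≤ Real.exp (-(9 / 160000) * (t - τ)) := (Real.exp_pos _).le
          calc ∑ K ∈ s, (if P K then ‖f K τ‖ else 0)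
              ≤ ∑ K ∈ s, Real.exp (-(9 / 160000) * (t - τ)) * ‖g (ε ^ 2 * τ) K‖ := by
                refine Finset.sum_le_sum fun K _ => ?_
                by_cases hP : P K
                · rw [if_pos hP]
                  have h1 : ‖f K τ‖ = Real.exp ((-(1 - (3 + ε * (K i0 : ℝ)) ^ 2) ^ 2
                        - 4 * ∑ i ∈ Finset.univ.filter (fun i => i ≠ i0),
                            (ε * (K i : ℝ)) ^ 2) * (t - τ)) * ‖g (ε ^ 2 * τ) K‖ := by
                    rw [hfdef]
                    rw [norm_smul, Real.norm_eq_abs, abs_of_pos (Real.exp_pos _)]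
                  rw [h1]
                  refine mul_le_mul_of_nonneg_right ?_ (norm_nonneg _)
                  refine Real.exp_le_exp.mpr ?_
                  exact mul_le_mul_of_nonneg_right (hlam K hP.1) (sub_nonneg.mpr hτ.2)
                · rw [if_neg hP]
                  exact mul_nonneg hexp_nn (norm_nonneg _)
            _ = Real.exp (-(9 / 160000) * (t - τ)) * ∑ K ∈ s, ‖g (ε ^ 2 * τ) K‖ :=
                (Finset.mul_sum _ _ _).symm
            _ ≤ Real.exp (-(9 / 160000) * (t - τ)) * CA ^ 3 :=
                mul_le_mul_of_nonneg_left
                  ((Summable.sum_le_tsum s (fun K _ => norm_nonneg _) hg'.1).trans hg'.2) hexp_nn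
            _ = CA ^ 3 * Real.exp (-(9 / 160000) * (t - τ)) := mul_comm _ _
      _ = CA ^ 3 * ∫ τ in (0 : ℝ)..t, Real.exp (-(9 / 160000) * (t - τ)) :=
          intervalIntegral.integral_const_mul _ _
      _ ≤ CA ^ 3 * (1 / (9 / 160000)) :=
          mul_le_mul_of_nonneg_left (exp_int_le _ t (by norm_num)) (by positivity)
      _ = CA ^ 3 * (160000 / 9) := by norm_num
  refine Summable.tsum_le_of_sum_le (summable_of_sum_le (fun K => ?_) hpartial) hpartial
  dsimp only
  split
  · exact norm_nonneg _
  · exact le_rfl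
end
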